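/- In the shifting argument for latency lower bounds: if each message delay in an execution lies in [d − u, d], and the schedule of one process is shifted earlier in real time by u/2 while message delivery times are adjusted, all adjusted delays still lie within [d − u, d], so the shifted execution is admissible and indistinguishable to all processes from the original. -/
import Mathlib


/-- **shifting argument.** In a timed execution in which every
message delay lies in `[d - u, d]` and all messages to or from process `q`
have delay exactly `d - u/2`, shifting the schedule of `q` earlier in real time
by `u/2` (which increases the delay of messages from `q` by `u/2` and decreases
the delay of messages to `q` by `u/2`) keeps all message delays within
`[d - u, d]`, so the shifted execution is admissible; moreover each process
sees its local events in the same relative order, so the shifted execution is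
indistinguishable to all processes from the original. -/
theorem shift_preserves_admissibility_and_local_order
    (Proc Message Event : Type) [DecidableEq Proc] (q : Proc)
    (sender receiver : Message → Proc)
    (sendTime recvTime : Message → ℝ)
    (proc : Event → Proc) (time : Event → ℝ)
    (d u : ℝ) (hu : 0 < u) (hud : u ≤ d)
    (hdelay : ∀ m, recvTime m - sendTime m ∈ Set.Icc (d - u) d)
    (hmid : ∀ m, (sender m = q ∨ receiver m = q) →
      recvTime m - sendTime m = d - u / 2)
    (shiftedDelay : Message → ℝ)
    (hshift : ∀ m, shiftedDelay m =
      if sender m = q ∧ receiver m ≠ q then (recvTime m - sendTime m) + u / 2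
      else if receiver m = q ∧ sender m ≠ q then (recvTime m - sendTime m) - u / 2
      else recvTime m - sendTime m)
    (shiftedTime : Event → ℝ)
    (hshiftTime : ∀ e, shiftedTime e =
      if proc e = q then time e - u / 2 else time e) :
    (∀ m, shiftedDelay m ∈ Set.Icc (d - u) d) ∧
    (∀ e e', proc e = proc e' →
      (shiftedTime e ≤ shiftedTime e' ↔ time e ≤ time e')) := by
  constructor
  · intro m
    rw [hshift]
    split_ifs with h1 h2
    · rw [hmid m (Or.inl h1.1)]
      constructor <;> linarith
    · rw [hmid m (Or.inr h2.1)]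
      constructor <;> linarith
    · exact hdelay m
  · intro e e' h
    rw [hshiftTime, hshiftTime, h]
    split_ifs <;> constructor <;> intro <;> linarith
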